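/- arXiv:1805.10708 — 4 statements merged into one kernel-verified Lean document; each statement's English description precedes it below -/
import Mathlib

section
/- Assume r ≥ 1. For every connected component C of the induced subgraph of G on V \ ({s, t} ∪ V(P_1) ∪ … ∪ V(P_r)) (a bridge), the vertices of C are single (uncontracted) vertices of the residual digraph G_res and are pairwise mutually reachable in G_res; that is, C is contained in a single strongly connected component of G_res. -/
namespace PaperTW

variable {V : Type*} [DecidableEq V]

/-- `v` is an internal vertex of the `s`–`t` walk `W`. -/
def Internal {G : SimpleGraph V} {s t : V} (W : G.Walk s t) (v : V) : Prop :=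
  v ∈ W.support ∧ v ≠ s ∧ v ≠ t

/-- The walk `W` (oriented from `s` to `t`) traverses an edge from `u` to `v`. -/
def Traversed {G : SimpleGraph V} {s t : V} (W : G.Walk s t) (u v : V) : Prop :=
  ∃ d ∈ W.darts, d.toProd = (u, v)

/-- A system of `s`–`t` paths that are pairwise vertex-disjoint except at the
shared endpoints `s` and `t`. -/
def PathSystem {G : SimpleGraph V} {s t : V} {r : ℕ} (P : Fin r → G.Walk s t) : Prop :=
  (∀ j, (P j).IsPath) ∧
    ∀ j j', j ≠ j' → ∀ v, v ∈ (P j).support → v ∈ (P j').support → v = s ∨ v = t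

/-- The vertex `v_in` of the split residual digraph. -/
def vin (v : V) : V ⊕ V := Sum.inl v

/-- The vertex `v_out` of the split residual digraph (with the conventions
`s_in = s_out = s` and `t_in = t_out = t`). -/
def vout (s t v : V) : V ⊕ V := if v = s ∨ v = t then Sum.inl v else Sum.inr v

variable (G : SimpleGraph V) (s t : V) {r : ℕ} (P : Fin r → G.Walk s t)

/-- Arcs of the split residual digraph `G'_res`. -/
inductive SplitArc : V ⊕ V → V ⊕ V → Prop
  | split (v : V) (h1 : v ≠ s) (h2 : v ≠ t) (h3 : ∀ j, ¬ Internal (P j) v) :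
      SplitArc (vin v) (vout s t v)
  | back (v : V) (j : Fin r) (h : Internal (P j) v) :
      SplitArc (vout s t v) (vin v)
  | offpath (u v : V) (h : G.Adj u v) (h2 : ∀ j, s(u, v) ∉ (P j).edges) :
      SplitArc (vout s t u) (vin v)
  | pathRev (u v : V) (j : Fin r) (h : Traversed (P j) u v) :
      SplitArc (vout s t v) (vin u)
  | pathRev' (u v : V) (j : Fin r) (h : Traversed (P j) u v) :
      SplitArc (vin v) (vout s t u)

open Classical in
/-- The identification map defining `G_res`: for every `v` internal to none of the
paths, `v_in` and `v_out` are identified into the single vertex `v`. -/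
noncomputable def collapse : V ⊕ V → V ⊕ V
  | Sum.inl v => Sum.inl v
  | Sum.inr v => if ∃ j, Internal (P j) v then Sum.inr v else Sum.inl v

/-- Arcs of the residual digraph `G_res`. -/
def ResArc (x y : V ⊕ V) : Prop :=
  ∃ a b, SplitArc G s t P a b ∧ x = collapse G s t P a ∧ y = collapse G s t P b

/-- The arcs `(v_out, u_in)` of `G_res` coming from edges of some path traversed
from `u` to `v` (these get deleted to form the reachability digraph). -/
def DeletedArc (x y : V ⊕ V) : Prop :=
  ∃ u v, (∃ j, Traversed (P j) u v) ∧
    x = collapse G s t P (vout s t v) ∧ y = collapse G s t P (vin u)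

/-- Arcs of `G_res` with the arcs `(v_out, u_in)` (for path edges traversed from
`u` to `v`) deleted. -/
def ReachArc (x y : V ⊕ V) : Prop :=
  ResArc G s t P x y ∧ ¬ DeletedArc G s t P x y

/-- Vertices lying on none of the paths (and different from `s`, `t`). -/
def offPath : Set V := {v | v ≠ s ∧ v ≠ t ∧ ∀ j, v ∉ (P j).support}

/-- Bridges: connected components of the subgraph of `G` induced on the vertices
off all the paths. -/
abbrev Bridge := (G.induce (offPath G s t P)).ConnectedComponent

/-- Vertices of the reachability digraph `G_R`: path vertices of `G_res`, plus one
contracted vertex `β_i` for each bridge `B_i`. -/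
abbrev GRV := (V ⊕ V) ⊕ Bridge G s t P

open Classical in
/-- The contraction map from vertices of `G_res` to vertices of `G_R`. -/
noncomputable def toGR : V ⊕ V → GRV G s t P
  | Sum.inl v =>
      if h : v ∈ offPath G s t P then
        Sum.inr ((G.induce (offPath G s t P)).connectedComponentMk ⟨v, h⟩)
      else Sum.inl (Sum.inl v)
  | Sum.inr v =>
      if h : v ∈ offPath G s t P then
        Sum.inr ((G.induce (offPath G s t P)).connectedComponentMk ⟨v, h⟩)
      else Sum.inl (Sum.inr v)

/-- Arcs of the reachability digraph `G_R` (arcs inside a bridge disappear). -/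
def GRArc (X Y : GRV G s t P) : Prop :=
  (∃ a b, ReachArc G s t P a b ∧ X = toGR G s t P a ∧ Y = toGR G s t P b) ∧ X ≠ Y

/-- The vertices of the directed path `P_j` inside `G_res`/`G_R`. -/
def OnPath (j : Fin r) (x : V ⊕ V) : Prop :=
  x = Sum.inl s ∨ x = Sum.inl t ∨ ∃ v, Internal (P j) v ∧ (x = Sum.inl v ∨ x = Sum.inr v)

/-- Numbering of the vertices of the directed path `P_j` of `G_R` (going from `t`
to `s`) starting from its final vertex `s`: `s` gets number 1, and the `i`-th
internal vertex `v` (counted from the `s`-side, whence `v` has index `i` in the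
support of `P_j`) contributes `v_in ↦ 2i` and `v_out ↦ 2i + 1`; finally `t` gets
the largest number. -/
def posOn (j : Fin r) : V ⊕ V → ℕ
  | Sum.inl v =>
      if v = s then 1
      else if v = t then 2 * (P j).support.length - 2
      else 2 * (P j).support.idxOf v
  | Sum.inr v => 2 * (P j).support.idxOf v + 1

/-- Positions on `P_j` of the in-neighbors of the bridge `β` in `G_R`. -/
def InPos (β : Bridge G s t P) (j : Fin r) : Set ℕ :=
  {n | ∃ x, OnPath G s t P j x ∧ GRArc G s t P (Sum.inl x) (Sum.inr β) ∧ posOn G s t P j x = n}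

/-- Positions on `P_j` of the out-neighbors of the bridge `β` in `G_R`. -/
def OutPos (β : Bridge G s t P) (j : Fin r) : Set ℕ :=
  {n | ∃ x, OnPath G s t P j x ∧ GRArc G s t P (Sum.inr β) (Sum.inl x) ∧ posOn G s t P j x = n}

/-- `l_β^j` is defined. -/
def HasL (β : Bridge G s t P) (j : Fin r) : Prop := (InPos G s t P β j).Nonempty

/-- `r_β^j` is defined. -/
def HasR (β : Bridge G s t P) (j : Fin r) : Prop := (OutPos G s t P β j).Nonempty

/-- The position of `l_β^j`, the leftmost in-neighbor of `β` on `P_j`. -/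
noncomputable def lpos (β : Bridge G s t P) (j : Fin r) : ℕ := sInf (InPos G s t P β j)

/-- The position of `r_β^j`, the rightmost out-neighbor of `β` on `P_j`. -/
noncomputable def rpos (β : Bridge G s t P) (j : Fin r) : ℕ := sSup (OutPos G s t P β j)

/-- Condition (a) of the definition of `D_j`. -/
def CondA (βi βx : Bridge G s t P) : Prop :=
  ∃ y : Fin r, HasL G s t P βx y ∧ HasR G s t P βi y ∧ lpos G s t P βx y ≤ rpos G s t P βi y

/-- Condition (b) of the definition of `D_j`. -/
def CondB (j : Fin r) (βi βx : Bridge G s t P) : Prop :=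
  HasR G s t P βx j ∧ (¬ HasR G s t P βi j ∨ rpos G s t P βi j < rpos G s t P βx j)

variable (ID : Bridge G s t P → ℕ)

/-- The arc set `D_j` of the bridge graph. -/
def DArc (j : Fin r) (βi βx : Bridge G s t P) : Prop :=
  βi ≠ βx ∧ CondA G s t P βi βx ∧ CondB G s t P j βi βx ∧
    ∀ βz : Bridge G s t P, βz ≠ βi → CondA G s t P βi βz → CondB G s t P j βi βz →
      (rpos G s t P βz j < rpos G s t P βx j ∨
        (rpos G s t P βz j = rpos G s t P βx j ∧ ID βz ≤ ID βx))

/-- Lying in the same connected component of the undirected graph underlying `D_j`. -/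
def SameCompD (j : Fin r) : Bridge G s t P → Bridge G s t P → Prop :=
  Relation.ReflTransGen (fun a b => DArc G s t P ID j a b ∨ DArc G s t P ID j b a)

/-- `v` is a vertex of the bridge `β`. -/
def InBridge (β : Bridge G s t P) (v : V) : Prop :=
  ∃ h : v ∈ offPath G s t P, (G.induce (offPath G s t P)).connectedComponentMk ⟨v, h⟩ = β

/-- The bridge `β` is `s`-reachable: some vertex of it is adjacent to `s` in `G`. -/
def SReachable (β : Bridge G s t P) : Prop := ∃ v, InBridge G s t P β v ∧ G.Adj s v

/-- The bridge `β` is `t`-reachable: some vertex of it is adjacent to `t` in `G`. -/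
def TReachable (β : Bridge G s t P) : Prop := ∃ v, InBridge G s t P β v ∧ G.Adj v t

/-- The bridge `β` is mutually reachable with `s` in the reachability digraph `G_R`. -/
def BridgeWithS (β : Bridge G s t P) : Prop :=
  Relation.ReflTransGen (GRArc G s t P) (Sum.inl (Sum.inl s)) (Sum.inr β) ∧
  Relation.ReflTransGen (GRArc G s t P) (Sum.inr β) (Sum.inl (Sum.inl s))

end PaperTW

namespace PaperTW

variable {V : Type*} {G : SimpleGraph V} {s t : V} {r : ℕ} {P : Fin r → G.Walk s t}

theorem vout_eq_inr [DecidableEq V] {v : V} (hs : v ≠ s) (ht : v ≠ t) :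
    vout s t v = Sum.inr v := by
  simp [vout, hs, ht]

theorem collapse_inr_of_mem_offPath {v : V} (hv : v ∈ offPath G s t P) :
    collapse G s t P (Sum.inr v) = Sum.inl v := by
  simp only [collapse, ite_eq_right_iff, reduceCtorEq, imp_false, not_exists]
  exact fun j hint => hv.2.2 j hint.1

theorem resArc_of_adj_of_mem_offPath [DecidableEq V] {u v : V} (hu : u ∈ offPath G s t P)
    (huv : G.Adj u v) :
    ResArc G s t P (Sum.inl u) (Sum.inl v) := by
  refine ⟨vout s t u, vin v, .offpath u v huv fun j he => hu.2.2 j ?_, ?_, rfl⟩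
  · exact (P j).fst_mem_support_of_mem_edges he
  · rw [vout_eq_inr hu.1 hu.2.1, collapse_inr_of_mem_offPath hu]

theorem reflTransGen_resArc_of_reachable [DecidableEq V] {u v : offPath G s t P}
    (h : (G.induce (offPath G s t P)).Reachable u v) :
    Relation.ReflTransGen (ResArc G s t P) (Sum.inl (u : V)) (Sum.inl (v : V)) :=
  ((SimpleGraph.reachable_iff_reflTransGen u v).mp h).lift
    (fun x : offPath G s t P => Sum.inl (x : V)) fun a _ hab => resArc_of_adj_of_mem_offPath a.2 hab

theorem bridge_stronglyConnected_in_residual_general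
    {V : Type*} [DecidableEq V]
    (G : SimpleGraph V) (s t : V)
    {r : ℕ} (P : Fin r → G.Walk s t) :
    (∀ v : offPath G s t P, collapse G s t P (Sum.inr (v : V)) = Sum.inl (v : V)) ∧
    ∀ u v : offPath G s t P,
      (G.induce (offPath G s t P)).Reachable u v →
        Relation.ReflTransGen (ResArc G s t P) (Sum.inl (u : V)) (Sum.inl (v : V)) ∧
        Relation.ReflTransGen (ResArc G s t P) (Sum.inl (v : V)) (Sum.inl (u : V)) :=
  ⟨fun v => collapse_inr_of_mem_offPath v.2, fun _ _ h =>
    ⟨reflTransGen_resArc_of_reachable h, reflTransGen_resArc_of_reachable h.symm⟩⟩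

/-- Assume `r ≥ 1`. For every connected component (bridge) of the subgraph of `G`
induced on `V \ ({s, t} ∪ V(P_1) ∪ … ∪ V(P_r))`, its vertices are single
(uncontracted) vertices of the residual digraph `G_res`, and any two vertices of
the same component are mutually reachable in `G_res`: each bridge lies in a
single strongly connected component of `G_res`. -/
theorem bridge_stronglyConnected_in_residual
    {V : Type*} [Fintype V] [DecidableEq V]
    (G : SimpleGraph V) (s t : V) (hst : s ≠ t)
    {r : ℕ} (hr : 1 ≤ r) (P : Fin r → G.Walk s t) (hP : PathSystem P) :
    (∀ v : offPath G s t P, collapse G s t P (Sum.inr (v : V)) = Sum.inl (v : V)) ∧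
    ∀ u v : offPath G s t P,
      (G.induce (offPath G s t P)).Reachable u v →
        Relation.ReflTransGen (ResArc G s t P) (Sum.inl (u : V)) (Sum.inl (v : V)) ∧
        Relation.ReflTransGen (ResArc G s t P) (Sum.inl (v : V)) (Sum.inl (u : V)) :=
  bridge_stronglyConnected_in_residual_general G s t P

end PaperTW
end

section
/- For every bridge β_i and every j ∈ {1, …, r}: if l_i^j is defined, then r_i^j is defined and the position of r_i^j on P_j is at least the position of l_i^j minus 1 (briefly, r_i^j ≥ l_i^j − 1). -/
/-! An in-arc `x → β` of a bridge on `P_j` comes from an edge `{u, w}` of `G` lying on no path,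
with `w ∈ β` and `x` the vertex `u_out` (which is `u` itself when `u ∈ {s, t}`). The same edge
yields the arc `(w_out, u_in)`, which is not among the deleted ones because `w` lies on no
path; so `u_in` is an out-neighbour of `β` on `P_j`, one step left of `u_out`. -/

namespace PaperTW

variable {V : Type*} {G : SimpleGraph V} {s t : V} {r : ℕ} {P : Fin r → G.Walk s t}

theorem Traversed.fst_mem_support {u v : V} {W : G.Walk s t} (h : Traversed W u v) :
    u ∈ W.support := by
  obtain ⟨d, hd, hp⟩ := h
  simpa [hp] using W.dart_fst_mem_support_of_mem_darts hd

theorem Traversed.snd_mem_support {u v : V} {W : G.Walk s t} (h : Traversed W u v) :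
    v ∈ W.support := by
  obtain ⟨d, hd, hp⟩ := h
  simpa [hp] using W.dart_snd_mem_support_of_mem_darts hd

theorem collapse_eq_inr {c : V ⊕ V} {v : V} (h : collapse G s t P c = Sum.inr v) :
    ∃ j, Internal (P j) v := by
  rcases c with w | w
  · cases h
  · simp only [collapse] at h
    split_ifs at h with hint
    cases h
    exact hint

theorem toGR_inl_of_notMem_offPath {w : V} (hw : w ∉ offPath G s t P) :
    toGR G s t P (Sum.inl w) = Sum.inl (Sum.inl w) :=
  dif_neg hw

theorem eq_of_toGR_eq_inl {c x : V ⊕ V} (h : toGR G s t P c = Sum.inl x) : c = x := by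
  rcases c with v | v <;>
  · simp only [toGR] at h
    split_ifs at h
    cases h
    rfl

theorem notMem_offPath_of_onPath_inl {j : Fin r} {u : V}
    (hu : OnPath G s t P j (Sum.inl u)) : u ∉ offPath G s t P := by
  rcases hu with hu | hu | ⟨v, hv, hu | hu⟩ <;> cases hu
  exacts [fun h => h.1 rfl, fun h => h.2.1 rfl, fun h => h.2.2 j hv.1]

variable [DecidableEq V]

theorem collapse_vout_of_mem_offPath {w : V} (hw : w ∈ offPath G s t P) :
    collapse G s t P (vout s t w) = Sum.inl w := by
  have hvout : vout s t w = Sum.inr w := if_neg (by rintro (rfl | rfl) <;> simp [offPath] at hw)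
  rw [hvout, collapse, if_neg fun ⟨j, hj⟩ => hw.2.2 j hj.1]

theorem collapse_vout_eq_inl {u z : V} (h : collapse G s t P (vout s t u) = Sum.inl z) :
    u = z ∧ (u = s ∨ u = t ∨ ¬ ∃ j, Internal (P j) u) := by
  unfold vout at h
  split_ifs at h with hst
  · cases h
    exact ⟨rfl, hst.imp_right Or.inl⟩
  · simp only [collapse] at h
    split_ifs at h with hint
    cases h
    exact ⟨rfl, Or.inr (Or.inr hint)⟩

theorem collapse_vout_eq_inr {u z : V} (h : collapse G s t P (vout s t u) = Sum.inr z) :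
    u = z := by
  unfold vout at h
  split_ifs at h
  · cases h
  · simp only [collapse] at h
    split_ifs at h
    cases h
    rfl

theorem onPath_inl_of_onPath_collapse_vout {j : Fin r} {u : V}
    (hu : OnPath G s t P j (collapse G s t P (vout s t u))) :
    OnPath G s t P j (Sum.inl u) ∧
      posOn G s t P j (collapse G s t P (vout s t u)) ≤ posOn G s t P j (Sum.inl u) + 1 := by
  rcases hu with hx | hx | ⟨v, hv, hx | hx⟩
  · obtain ⟨rfl, -⟩ := collapse_vout_eq_inl hx
    exact ⟨Or.inl rfl, hx ▸ Nat.le_succ _⟩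
  · obtain ⟨rfl, -⟩ := collapse_vout_eq_inl hx
    exact ⟨Or.inr (Or.inl rfl), hx ▸ Nat.le_succ _⟩
  · obtain ⟨rfl, hu | hu | hu⟩ := collapse_vout_eq_inl hx
    exacts [absurd hu hv.2.1, absurd hu hv.2.2, absurd ⟨j, hv⟩ hu]
  · obtain rfl := collapse_vout_eq_inr hx
    refine ⟨Or.inr (Or.inr ⟨u, hv, Or.inl rfl⟩), ?_⟩
    rw [hx, posOn, posOn, if_neg hv.2.1, if_neg hv.2.2]

theorem exists_adj_of_grArc_to_bridge {x : V ⊕ V} {β : Bridge G s t P}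
    (h : GRArc G s t P (Sum.inl x) (Sum.inr β)) :
    ∃ u w, w ∈ offPath G s t P ∧ toGR G s t P (Sum.inl w) = Sum.inr β ∧
      G.Adj u w ∧ (∀ j, s(u, w) ∉ (P j).edges) ∧ x = collapse G s t P (vout s t u) := by
  obtain ⟨⟨a, b, ⟨⟨a', b', hsplit, ha, hb⟩, -⟩, hxa, hβb⟩, -⟩ := h
  have hx : x = collapse G s t P a' := ha ▸ (eq_of_toGR_eq_inl hxa.symm).symm
  obtain ⟨w, hw, rfl, hwβ⟩ : ∃ w, w ∈ offPath G s t P ∧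
      b = Sum.inl w ∧ toGR G s t P (Sum.inl w) = Sum.inr β := by
    rcases b with v | v
    · by_cases hv : v ∈ offPath G s t P
      · exact ⟨v, hv, rfl, hβb.symm⟩
      · simp [toGR_inl_of_notMem_offPath hv] at hβb
    · obtain ⟨j, hj⟩ := collapse_eq_inr hb.symm
      by_cases hv : v ∈ offPath G s t P
      · exact absurd hj.1 (hv.2.2 j)
      · simp [toGR, hv] at hβb
  cases hsplit with
  | split v =>
    obtain ⟨rfl, -⟩ := collapse_vout_eq_inl hb.symm
    simp [ha, vin, collapse, hwβ] at hxa
  | back v j hint =>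
    cases hb
    exact absurd hint.1 (hw.2.2 j)
  | offpath u v hadj hoff =>
    cases hb
    exact ⟨u, _, hw, hwβ, hadj, hoff, hx⟩
  | pathRev u v j htr =>
    cases hb
    exact absurd htr.fst_mem_support (hw.2.2 j)
  | pathRev' u v j htr =>
    obtain ⟨rfl, -⟩ := collapse_vout_eq_inl hb.symm
    exact absurd htr.fst_mem_support (hw.2.2 j)

theorem grArc_from_bridge_of_adj {β : Bridge G s t P} {u w : V} (hw : w ∈ offPath G s t P)
    (hwβ : toGR G s t P (Sum.inl w) = Sum.inr β) (hadj : G.Adj u w)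
    (hoff : ∀ j, s(u, w) ∉ (P j).edges) (hu : u ∉ offPath G s t P) :
    GRArc G s t P (Sum.inr β) (Sum.inl (Sum.inl u)) := by
  have hres : ResArc G s t P (Sum.inl w) (Sum.inl u) :=
    ⟨_, _, SplitArc.offpath w u hadj.symm (fun j => Sym2.eq_swap ▸ hoff j),
      (collapse_vout_of_mem_offPath hw).symm, rfl⟩
  have hkept : ¬ DeletedArc G s t P (Sum.inl w) (Sum.inl u) := by
    rintro ⟨u', v', ⟨j, htr⟩, hv', -⟩
    obtain ⟨rfl, -⟩ := collapse_vout_eq_inl hv'.symm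
    exact hw.2.2 j htr.snd_mem_support
  exact ⟨⟨_, _, ⟨hres, hkept⟩, hwβ.symm, (toGR_inl_of_notMem_offPath hu).symm⟩, by simp⟩

theorem posOn_le (j : Fin r) (x : V ⊕ V) :
    posOn G s t P j x ≤ 2 * (P j).support.length + 1 := by
  rcases x with v | v <;> have := List.idxOf_le_length (l := (P j).support) (a := v)
  · simp only [posOn]
    split_ifs <;> omega
  · simp only [posOn]
    omega

theorem bddAbove_outPos (β : Bridge G s t P) (j : Fin r) : BddAbove (OutPos G s t P β j) :=
  ⟨_, by rintro _ ⟨x, -, -, rfl⟩; exact posOn_le j x⟩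

theorem rpos_defined_and_ge_lpos_sub_one_general
    {V : Type*} [DecidableEq V]
    (G : SimpleGraph V) (s t : V)
    {r : ℕ} (P : Fin r → G.Walk s t) :
    ∀ (β : Bridge G s t P) (j : Fin r),
      HasL G s t P β j →
        HasR G s t P β j ∧ lpos G s t P β j ≤ rpos G s t P β j + 1 := by
  rintro β j ⟨_, x, hxOn, hxArc, rfl⟩
  obtain ⟨u, w, hw, hwβ, hadj, hoff, rfl⟩ := exists_adj_of_grArc_to_bridge hxArc
  obtain ⟨huOn, hpos⟩ := onPath_inl_of_onPath_collapse_vout hxOn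
  have hout : posOn G s t P j (Sum.inl u) ∈ OutPos G s t P β j :=
    ⟨_, huOn, grArc_from_bridge_of_adj hw hwβ hadj hoff (notMem_offPath_of_onPath_inl huOn), rfl⟩
  refine ⟨⟨_, hout⟩, ?_⟩
  calc lpos G s t P β j ≤ posOn G s t P j (collapse G s t P (vout s t u)) :=
        Nat.sInf_le ⟨_, hxOn, hxArc, rfl⟩
    _ ≤ posOn G s t P j (Sum.inl u) + 1 := hpos
    _ ≤ rpos G s t P β j + 1 := Nat.add_le_add_right (le_csSup (bddAbove_outPos β j) hout) 1

/-- For every bridge `β` and every `j ∈ {1, …, r}`: if `l_β^j` is defined, then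
`r_β^j` is defined and its position on `P_j` is at least the position of `l_β^j`
minus 1 (briefly, `r_β^j ≥ l_β^j − 1`). -/
theorem rpos_defined_and_ge_lpos_sub_one
    {V : Type*} [Fintype V] [DecidableEq V]
    (G : SimpleGraph V) (s t : V) (hst : s ≠ t)
    {r : ℕ} (hr : 1 ≤ r) (P : Fin r → G.Walk s t) (hP : PathSystem P) :
    ∀ (β : Bridge G s t P) (j : Fin r),
      HasL G s t P β j →
        HasR G s t P β j ∧ lpos G s t P β j ≤ rpos G s t P β j + 1 :=
  rpos_defined_and_ge_lpos_sub_one_general G s t P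

end PaperTW
end

section
/- Let (β_i, β_x) and (β_{i'}, β_{x'}) be arcs of D_1, and let y be the minimal index in {1, …, r} such that l_x^y and r_i^y are defined and l_x^y is left of or equal to r_i^y (such a y exists by condition (a)). If l_{x'}^y and r_{i'}^y are defined and l_{x'}^y is left of or equal to l_x^y, and l_x^y is left of or equal to r_{i'}^y, then x = x'. -/
/-!
Both `x` and `x'` satisfy condition (a) for `i` as well as for `i'`: this is what the hypotheses
on the positions along `P_y` give. Condition (b) on `P_1` passes from the bridge with the smaller
`r^1` to the one with the larger, so each of `x`, `x'` competes in the maximisation that selects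
the other. Lexicographic maximality of `(r^1, ID)` on both sides, with `ID` injective, forces
`x = x'`.
-/

namespace PaperTW

variable {V : Type*} [DecidableEq V]

variable (G : SimpleGraph V) (s t : V) {r : ℕ} (P : Fin r → G.Walk s t)

variable (ID : Bridge G s t P → ℕ)

noncomputable def rank (j : Fin r) (β : Bridge G s t P) : Lex (ℕ × ℕ) :=
  toLex (rpos G s t P β j, ID β)

variable {G s t P ID}

theorem CondB.ne {j : Fin r} {βi βx : Bridge G s t P} (h : CondB G s t P j βi βx) :
    βi ≠ βx := by
  rintro rfl
  obtain ⟨hR, hnR | hlt⟩ := h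
  · exact hnR hR
  · exact hlt.false

theorem CondB.of_rpos_le {j : Fin r} {βi βz βx : Bridge G s t P} (h : CondB G s t P j βi βz)
    (hR : HasR G s t P βx j) (hle : rpos G s t P βz j ≤ rpos G s t P βx j) :
    CondB G s t P j βi βx :=
  ⟨hR, h.2.imp_right (·.trans_le hle)⟩

theorem rpos_le_of_rank_le {j : Fin r} {β β' : Bridge G s t P}
    (h : rank G s t P ID j β ≤ rank G s t P ID j β') :
    rpos G s t P β j ≤ rpos G s t P β' j := by
  rcases Prod.Lex.le_iff.mp h with hlt | ⟨heq, -⟩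
  · exact hlt.le
  · exact heq.le

theorem DArc.rank_le {j : Fin r} {βi βx βz : Bridge G s t P} (h : DArc G s t P ID j βi βx)
    (hA : CondA G s t P βi βz) (hB : CondB G s t P j βi βz) :
    rank G s t P ID j βz ≤ rank G s t P ID j βx :=
  Prod.Lex.le_iff.mpr (h.2.2.2 βz hB.ne.symm hA hB)

theorem DArc.rank_le_of_rpos_le {j : Fin r} {βi βx βi' βx' : Bridge G s t P}
    (h : DArc G s t P ID j βi βx) (h' : DArc G s t P ID j βi' βx')
    (hA : CondA G s t P βi' βx) (hle : rpos G s t P βx' j ≤ rpos G s t P βx j) :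
    rank G s t P ID j βx ≤ rank G s t P ID j βx' :=
  h'.rank_le hA (h'.2.2.1.of_rpos_le h.2.2.1.1 hle)

theorem DArc.target_eq_of_condA {j : Fin r} (hID : Function.Injective ID)
    {βi βx βi' βx' : Bridge G s t P}
    (h : DArc G s t P ID j βi βx) (h' : DArc G s t P ID j βi' βx')
    (hA : CondA G s t P βi' βx) (hA' : CondA G s t P βi βx') : βx = βx' := by
  wlog hle : rpos G s t P βx' j ≤ rpos G s t P βx j generalizing βi βx βi' βx'
  · exact (this h' h hA' hA (le_of_not_ge hle)).symm
  have hrank : rank G s t P ID j βx ≤ rank G s t P ID j βx' :=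
    h.rank_le_of_rpos_le h' hA hle
  have hrank' : rank G s t P ID j βx' ≤ rank G s t P ID j βx :=
    h'.rank_le_of_rpos_le h hA' (rpos_le_of_rank_le hrank)
  exact hID (Prod.ext_iff.mp (toLex.injective (hrank.antisymm hrank'))).2

theorem unique_left_endpoint_in_D1_general
    {V : Type*} [DecidableEq V]
    (G : SimpleGraph V) (s t : V)
    {r : ℕ} (hr : 0 < r) (P : Fin r → G.Walk s t)
    (ID : Bridge G s t P → ℕ) (hID : Function.Injective ID)
    (βi βx βi' βx' : Bridge G s t P)
    (h1 : DArc G s t P ID ⟨0, hr⟩ βi βx)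
    (h2 : DArc G s t P ID ⟨0, hr⟩ βi' βx')
    (y : Fin r)
    (hy : HasL G s t P βx y ∧ HasR G s t P βi y ∧
      lpos G s t P βx y ≤ rpos G s t P βi y)
    (ha : HasL G s t P βx' y) (hb : HasR G s t P βi' y)
    (hc : lpos G s t P βx' y ≤ lpos G s t P βx y)
    (hd : lpos G s t P βx y ≤ rpos G s t P βi' y) :
    βx = βx' :=
  h1.target_eq_of_condA hID h2 ⟨y, hy.1, hb, hd⟩ ⟨y, ha, hy.2.1, hc.trans hy.2.2⟩

/-- Let `(β_i, β_x)` and `(β_i', β_x')` be arcs of `D_1`, and let `y` be the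
minimal index such that `l_x^y` and `r_i^y` are defined with `l_x^y ≤ r_i^y`.
If `l_{x'}^y` and `r_{i'}^y` are defined with `l_{x'}^y ≤ l_x^y` and
`l_x^y ≤ r_{i'}^y`, then `x = x'`. -/
theorem unique_left_endpoint_in_D1
    {V : Type*} [Fintype V] [DecidableEq V]
    (G : SimpleGraph V) (s t : V) (hst : s ≠ t)
    {r : ℕ} (hr : 0 < r) (P : Fin r → G.Walk s t) (hP : PathSystem P)
    (ID : Bridge G s t P → ℕ) (hID : Function.Injective ID)
    (βi βx βi' βx' : Bridge G s t P)
    (h1 : DArc G s t P ID ⟨0, hr⟩ βi βx)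
    (h2 : DArc G s t P ID ⟨0, hr⟩ βi' βx')
    (y : Fin r)
    (hy : HasL G s t P βx y ∧ HasR G s t P βi y ∧
      lpos G s t P βx y ≤ rpos G s t P βi y)
    (hymin : ∀ y' : Fin r, y' < y →
      ¬ (HasL G s t P βx y' ∧ HasR G s t P βi y' ∧
          lpos G s t P βx y' ≤ rpos G s t P βi y'))
    (ha : HasL G s t P βx' y) (hb : HasR G s t P βi' y)
    (hc : lpos G s t P βx' y ≤ lpos G s t P βx y)
    (hd : lpos G s t P βx y ≤ rpos G s t P βi' y) :
    βx = βx' :=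
  unique_left_endpoint_in_D1_general G s t hr P ID hID βi βx βi' βx' h1 h2 y hy ha hb hc hd

end PaperTW
end

section
/- Let G = (V, E) be a finite simple graph of treewidth at most k, and let X ⊆ V. Then there exists an (X, 2/3)-balanced separator of G of size at most k+1: that is, there exist pairwise disjoint sets A, B, S with A ∪ B ∪ S = V, |S| ≤ k+1, no edge of G joining a vertex of A to a vertex of B, |A ∩ X| ≤ (2/3)·|X|, and |B ∩ X| ≤ (2/3)·|X|. -/
/-!
Let `t` be a node of the decomposition tree minimising the total distance to a chosen bag of each
vertex of `X`, and say that a node lies beyond a neighbour `y` of `t` if it is nearer to `y` than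
to `t`. Stepping from `t` to `y` brings the chosen bags beyond `y` one step closer and all others
at most one step farther, so by minimality at most half of `X` has its chosen bag beyond `y`. The
bags of a vertex outside `bags t` form a subtree avoiding `t`, hence all lie beyond one and the
same neighbour of `t`; as the ends of an edge share a bag, grouping the vertices outside `bags t`
by that neighbour groups the components of `G - bags t`. Splitting the groups into two sides, each
carrying at most two thirds of `X`, gives `A` and `B`.
-/

/-- `(T, bags)` is a tree decomposition of the graph `G`: `T` is a tree, every
vertex of `G` lies in some bag, the bags containing any fixed vertex induce a
connected subtree of `T`, and every edge of `G` is contained in some bag. -/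
def IsTreeDecomp {V : Type*} {ι : Type*} (G : SimpleGraph V) (T : SimpleGraph ι)
    (bags : ι → Finset V) : Prop :=
  T.IsTree ∧
  (∀ v : V, ∃ x, v ∈ bags x) ∧
  (∀ v : V, (T.induce {x | v ∈ bags x}).Connected) ∧
  (∀ u v : V, G.Adj u v → ∃ x, u ∈ bags x ∧ v ∈ bags x)

open Finset

theorem Finset.exists_subset_three_mul_sum_le {β : Type*} [DecidableEq β] (s : Finset β)
    (w : β → ℕ) {n : ℕ} (hw : ∀ i ∈ s, 2 * w i ≤ n) (hs : ∑ i ∈ s, w i ≤ n) :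
    ∃ a ⊆ s, 3 * ∑ i ∈ a, w i ≤ 2 * n ∧ 3 * ∑ i ∈ s \ a, w i ≤ 2 * n := by
  by_cases hbig : ∃ i ∈ s, n ≤ 3 * w i
  · obtain ⟨i, hi, hni⟩ := hbig
    have hsplit := sum_sdiff (singleton_subset_iff.2 hi) (f := w)
    rw [sum_singleton] at hsplit
    refine ⟨{i}, singleton_subset_iff.2 hi, ?_, ?_⟩
    · rw [sum_singleton]
      linarith [hw i hi]
    · omega
  push Not at hbig
  -- a largest admissible `a` leaves at most `2n/3` outside: otherwise `∑ a < n/3`, and any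
  -- further part, being `< n/3`, could be added to `a`
  obtain ⟨a, ha, hmax⟩ := exists_max_image {a ∈ s.powerset | 3 * ∑ i ∈ a, w i ≤ 2 * n} card
    ⟨∅, by simp⟩
  rw [mem_filter, mem_powerset] at ha
  refine ⟨a, ha.1, ha.2, ?_⟩
  by_contra! hrest
  obtain ⟨i, hi⟩ : (s \ a).Nonempty := nonempty_of_sum_ne_zero (f := w) (by omega)
  rw [mem_sdiff] at hi
  have hsplit := sum_sdiff ha.1 (f := w)
  have hins := hmax (insert i a) (by
    rw [mem_filter, mem_powerset, sum_insert hi.2]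
    exact ⟨insert_subset hi.1 ha.1, by linarith [hbig i hi.1]⟩)
  rw [card_insert_of_notMem hi.2] at hins
  omega

namespace SimpleGraph

variable {ι : Type*} {T : SimpleGraph ι} {t y y' z z' : ι}

theorem Preconnected.imp_of_adj {V : Type*} {G : SimpleGraph V} (hG : G.Preconnected)
    {P : V → Prop} (hP : ∀ ⦃u v⦄, G.Adj u v → P u → P v) (u v : V) (hu : P u) : P v := by
  obtain ⟨p⟩ := hG u v
  induction p with
  | nil => exact hu
  | cons h _ ih => exact ih (hP h hu)

theorem Connected.exists_adj_dist_lt (hT : T.Connected) (hz : z ≠ t) :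
    ∃ y, T.Adj t y ∧ T.dist y z < T.dist t z := by
  obtain ⟨p, hp⟩ := hT.exists_walk_length_eq_dist t z
  cases p with
  | nil => exact absurd rfl hz
  | cons h q => exact ⟨_, h, hp ▸ Nat.lt_succ_of_le (dist_le q)⟩

theorem IsTree.eq_of_adj_of_dist_lt (hT : T.IsTree) (hy : T.Adj t y) (hy' : T.Adj t y')
    (h : T.dist y z < T.dist t z) (h' : T.dist y' z < T.dist t z) : y = y' := by
  have path_via : ∀ y, T.Adj t y → T.dist y z < T.dist t z → ∃ p : T.Path t z, p.1.snd = y := by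
    intro y hy h
    obtain ⟨q, hq⟩ := hT.connected.exists_walk_length_eq_dist y z
    have hlen : (Walk.cons hy q).length = T.dist t z := by
      have := dist_le (Walk.cons hy q)
      rw [Walk.length_cons] at this ⊢
      omega
    exact ⟨⟨_, Walk.isPath_of_length_eq_dist _ hlen⟩, Walk.snd_cons q hy⟩
  obtain ⟨p, rfl⟩ := path_via y hy h
  obtain ⟨p', rfl⟩ := path_via y' hy' h'
  rw [(hT.isAcyclic.subsingleton_path t z).elim p p']

theorem IsTree.dist_lt_of_adj (hT : T.IsTree) (hy : T.Adj t y) (hz : T.Adj z z')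
    (hz' : z' ≠ t) (h : T.dist y z < T.dist t z) : T.dist y z' < T.dist t z' := by
  have away : ∀ {w w' y}, T.Adj w w' → T.dist t w' = T.dist t w + 1 →
      T.dist y w < T.dist t w → T.dist y w' < T.dist t w' := by
    intro w w' y hw hfar h
    rcases hw.diff_dist_adj (u := y) with h1 | h1 | h1 <;> omega
  rcases hT.dist_eq_dist_add_one_of_adj t hz with hnear | hfar
  -- `z'` lies beyond some neighbour `y'` of `t`, and then so does the farther `z`
  · obtain ⟨y', hy', h'⟩ := hT.connected.exists_adj_dist_lt hz'
    rwa [hT.eq_of_adj_of_dist_lt hy hy' h (away hz.symm hnear h')]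
  · exact away hz hfar h

theorem two_mul_card_filter_dist_lt_le {α : Type*} (f : α → ι) (X : Finset α)
    (hy : T.Adj t y) (hmin : ∑ v ∈ X, T.dist t (f v) ≤ ∑ v ∈ X, T.dist y (f v)) :
    2 * #{v ∈ X | T.dist y (f v) < T.dist t (f v)} ≤ #X := by
  have step : ∀ v ∈ X, T.dist y (f v) + 2 * (if T.dist y (f v) < T.dist t (f v) then 1 else 0)
      ≤ T.dist t (f v) + 1 := by
    intro v _
    have := hy.symm.reachable.dist_triangle_left (f v)
    rw [dist_eq_one_iff_adj.2 hy.symm] at this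
    split_ifs <;> omega
  have hsum := sum_le_sum step
  rw [sum_add_distrib, sum_add_distrib, ← mul_sum, ← card_filter, sum_const, smul_eq_mul,
    mul_one] at hsum
  omega

end SimpleGraph


theorem IsTreeDecomp.dist_lt_of_mem_bags {V ι : Type*} {G : SimpleGraph V} {T : SimpleGraph ι}
    {bags : ι → Finset V} (hD : IsTreeDecomp G T bags) {t y x x' : ι} {v : V}
    (hy : T.Adj t y) (hv : v ∉ bags t) (hx : v ∈ bags x) (hx' : v ∈ bags x')
    (h : T.dist y x < T.dist t x) : T.dist y x' < T.dist t x' :=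
  (hD.2.2.1 v).preconnected.imp_of_adj (P := fun z => T.dist y z.1 < T.dist t z.1)
    (fun _ z' hzz' hz => hD.1.dist_lt_of_adj hy hzz' (fun h => hv (h ▸ z'.2)) hz)
    ⟨x, hx⟩ ⟨x', hx'⟩ h

section BalancedLabel

variable {V β : Type*} [DecidableEq V] [DecidableEq β]

/-- A grouping of the components of `G - S` into classes, none of which holds more than half of
`X`; the labels of the vertices of `S` play no role. -/
def SimpleGraph.IsBalancedLabel (G : SimpleGraph V) (S X : Finset V) (c : V → β) : Prop :=
  (∀ a b, G.Adj a b → a ∉ S → b ∉ S → c a = c b) ∧ ∀ y, 2 * #{v ∈ X \ S | c v = y} ≤ #X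

theorem SimpleGraph.IsBalancedLabel.exists_separation [Fintype V] {G : SimpleGraph V}
    {S X : Finset V} {c : V → β} (hc : G.IsBalancedLabel S X c) :
    ∃ A B : Finset V, Disjoint A B ∧ Disjoint A S ∧ Disjoint B S ∧ A ∪ B ∪ S = univ ∧
      (∀ a ∈ A, ∀ b ∈ B, ¬ G.Adj a b) ∧ 3 * #(A ∩ X) ≤ 2 * #X ∧ 3 * #(B ∩ X) ≤ 2 * #X := by
  have card_le_sum : ∀ M : Finset β,
      #{v ∈ X \ S | c v ∈ M} ≤ ∑ y ∈ M, #{v ∈ X \ S | c v = y} := fun M =>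
    calc #{v ∈ X \ S | c v ∈ M} = ∑ y ∈ M, #{v ∈ {v ∈ X \ S | c v ∈ M} | c v = y} :=
          card_eq_sum_card_fiberwise fun v hv => (mem_filter.1 hv).2
      _ ≤ _ := sum_le_sum fun y _ => card_le_card (filter_subset_filter _ (filter_subset _ _))
  set L := (X \ S).image c
  obtain ⟨N, hNL, hN, hLN⟩ := L.exists_subset_three_mul_sum_le
    (fun y => #{v ∈ X \ S | c v = y}) (fun y _ => hc.2 y)
    (by rw [← card_eq_sum_card_image]; exact card_le_card sdiff_subset)
  refine ⟨({v | v ∉ S ∧ c v ∈ N} : Finset V), ({v | v ∉ S ∧ c v ∉ N} : Finset V),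
    ?_, ?_, ?_, ?_, ?_, ?_, ?_⟩
  · exact disjoint_filter.2 fun v _ hA hB => hB.2 hA.2
  · exact Finset.disjoint_left.2 fun _ hv => (mem_filter.1 hv).2.1
  · exact Finset.disjoint_left.2 fun _ hv => (mem_filter.1 hv).2.1
  · ext v
    simp only [mem_union, mem_filter, mem_univ, true_and, iff_true]
    tauto
  · intro a ha b hb hab
    rw [mem_filter] at ha hb
    exact hb.2.2 (hc.1 a b hab ha.2.1 hb.2.1 ▸ ha.2.2)
  · calc _ ≤ 3 * #{v ∈ X \ S | c v ∈ N} := by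
          gcongr
          intro v
          simp only [mem_inter, mem_filter, mem_sdiff, mem_univ, true_and]
          tauto
      _ ≤ 3 * ∑ y ∈ N, #{v ∈ X \ S | c v = y} := by gcongr; exact card_le_sum N
      _ ≤ 2 * #X := hN
  · calc _ ≤ 3 * #{v ∈ X \ S | c v ∈ L \ N} := by
          gcongr
          intro v
          simp only [mem_inter, mem_filter, mem_sdiff, mem_univ, true_and]
          rintro ⟨⟨hvS, hvN⟩, hvX⟩
          exact ⟨⟨hvX, hvS⟩, mem_image_of_mem c (mem_sdiff.2 ⟨hvX, hvS⟩), hvN⟩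
      _ ≤ 3 * ∑ y ∈ L \ N, #{v ∈ X \ S | c v = y} := by gcongr; exact card_le_sum _
      _ ≤ 2 * #X := hLN

end BalancedLabel

theorem IsTreeDecomp.exists_isBalancedLabel {V ι : Type*} [DecidableEq V] [Fintype ι]
    [DecidableEq ι] {G : SimpleGraph V} {T : SimpleGraph ι} {bags : ι → Finset V}
    (hD : IsTreeDecomp G T bags) (X : Finset V) :
    ∃ (t : ι) (c : V → ι), G.IsBalancedLabel (bags t) X c := by
  have hT : T.IsTree := hD.1
  choose node hnode using hD.2.1
  have : Nonempty ι := hT.connected.nonempty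
  obtain ⟨t, -, ht⟩ := exists_min_image univ (fun x => ∑ v ∈ X, T.dist x (node v)) univ_nonempty
  have hlabel : ∀ v, ∃ y, v ∉ bags t → T.Adj t y ∧ T.dist y (node v) < T.dist t (node v) := by
    intro v
    by_cases hv : v ∈ bags t
    · exact ⟨t, absurd hv⟩
    · have hne : node v ≠ t := fun h => hv (h ▸ hnode v)
      obtain ⟨y, hy⟩ := hT.connected.exists_adj_dist_lt hne
      exact ⟨y, fun _ => hy⟩
  choose c hc using hlabel
  refine ⟨t, c, fun a b hab ha hb => ?_, fun y => ?_⟩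
  · obtain ⟨x, hxa, hxb⟩ := hD.2.2.2 a b hab
    exact hT.eq_of_adj_of_dist_lt (hc a ha).1 (hc b hb).1
      (hD.dist_lt_of_mem_bags (hc a ha).1 ha (hnode a) hxa (hc a ha).2)
      (hD.dist_lt_of_mem_bags (hc b hb).1 hb (hnode b) hxb (hc b hb).2)
  by_cases hy : T.Adj t y
  · calc 2 * #{v ∈ X \ bags t | c v = y}
          ≤ 2 * #{v ∈ X | T.dist y (node v) < T.dist t (node v)} := by
          gcongr
          intro v
          simp only [mem_filter, mem_sdiff]
          rintro ⟨⟨hvX, hvt⟩, rfl⟩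
          exact ⟨hvX, (hc v hvt).2⟩
      _ ≤ #X := SimpleGraph.two_mul_card_filter_dist_lt_le node X hy (ht y (mem_univ y))
  · rw [filter_false_of_mem fun v hv (hcv : c v = y) => hy (hcv ▸ (hc v (mem_sdiff.1 hv).2).1)]
    simp

/-- If the finite simple graph `G` has treewidth at most `k` (i.e., admits a tree
decomposition with every bag of size at most `k + 1`), then for every `X ⊆ V`
there is an `(X, 2/3)`-balanced separator of size at most `k + 1`: pairwise
disjoint sets `A`, `B`, `S` covering `V`, with `|S| ≤ k + 1`, no edge of `G`
joining `A` to `B`, and `|A ∩ X| ≤ (2/3)·|X|`, `|B ∩ X| ≤ (2/3)·|X|`. -/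
theorem balanced_separator_of_treewidth {V : Type*} [Fintype V] [DecidableEq V]
    (G : SimpleGraph V) (k : ℕ)
    (htw : ∃ (ι : Type) (_ : Fintype ι) (T : SimpleGraph ι) (bags : ι → Finset V),
        IsTreeDecomp G T bags ∧ ∀ x, (bags x).card ≤ k + 1)
    (X : Finset V) :
    ∃ A B S : Finset V,
      Disjoint A B ∧ Disjoint A S ∧ Disjoint B S ∧
      A ∪ B ∪ S = Finset.univ ∧
      S.card ≤ k + 1 ∧
      (∀ a ∈ A, ∀ b ∈ B, ¬ G.Adj a b) ∧
      3 * (A ∩ X).card ≤ 2 * X.card ∧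
      3 * (B ∩ X).card ≤ 2 * X.card := by
  classical
  obtain ⟨ι, _, T, bags, hD, hsize⟩ := htw
  obtain ⟨t, c, hc⟩ := IsTreeDecomp.exists_isBalancedLabel hD X
  obtain ⟨A, B, hAB, hAS, hBS, hcover, hedge, hA, hB⟩ := hc.exists_separation
  exact ⟨A, B, bags t, hAB, hAS, hBS, hcover, hsize t, hedge, hA, hB⟩
end
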